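/- Let X be a compact, C-bounded turning metric space with metric d, Y a metric space, f : X → Y a non-constant branched quasisymmetry with control homeomorphism η, and d_f the pullback metric on X. Then the identity map from (X,d) to (X,d_f) is an η̃-quasisymmetric homeomorphism, where η̃(t) = η(C·t). -/

import Mathlib

open Metric Set
open scoped ENNReal NNReal

/-- A continuum: a nonempty compact connected set. -/
def IsContinuum {X : Type*} [TopologicalSpace X] (K : Set X) : Prop :=
  IsCompact K ∧ IsConnected K

/-- `X` is `C`-bounded turning: every pair of points lies in a continuum of
diameter at most `C` times their distance. -/
def BoundedTurningWith (X : Type*) [PseudoMetricSpace X] (C : ℝ) : Prop :=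
  ∀ x y : X, ∃ K : Set X, IsContinuum K ∧ x ∈ K ∧ y ∈ K ∧ Metric.diam K ≤ C * dist x y

/-- `η` is a (necessarily increasing) homeomorphism of `[0,∞)` onto itself. -/
def IsQSControl (η : ℝ → ℝ) : Prop :=
  ContinuousOn η (Set.Ici 0) ∧ StrictMonoOn η (Set.Ici 0) ∧
    Set.MapsTo η (Set.Ici 0) (Set.Ici 0) ∧ Set.SurjOn η (Set.Ici 0) (Set.Ici 0)

/-- `f` is a branched quasisymmetry with control homeomorphism `η`:
`f` is continuous and distorts ratios of diameters of intersecting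
non-trivial continua in a manner controlled by `η`. -/
def BranchedQS {X Y : Type*} [PseudoMetricSpace X] [PseudoMetricSpace Y]
    (η : ℝ → ℝ) (f : X → Y) : Prop :=
  Continuous f ∧ IsQSControl η ∧
    ∀ E E' : Set X, IsContinuum E → IsContinuum E' → E.Nontrivial → E'.Nontrivial →
      (E ∩ E').Nonempty →
        Metric.diam (f '' E) ≤ η (Metric.diam E / Metric.diam E') * Metric.diam (f '' E')

/-- The Guo–Williams pullback distance associated to `f`:
`d_f(x,y) = inf {diam (f '' K) : K a continuum containing x and y}`. -/
noncomputable def pullbackDist {X Y : Type*} [TopologicalSpace X] [PseudoMetricSpace Y]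
    (f : X → Y) (x y : X) : ℝ :=
  sInf {t : ℝ | ∃ K : Set X, IsContinuum K ∧ x ∈ K ∧ y ∈ K ∧ t = Metric.diam (f '' K)}

/-!
Quasisymmetry: join `x` to `a` by a continuum `K` with `diam K ≤ C d(x,a)`. Every continuum `K'`
through `x` and `b` has `diam K' ≥ d(x,b)`, so the branched quasisymmetry inequality for the
intersecting pair `K, K'` gives `diam f(K) ≤ η(C d(x,a)/d(x,b)) diam f(K')`; now take the
infimum over `K'`.

Homeomorphism: by bounded turning and uniform continuity of `f`, `d_f` is small where `d` is.
Conversely, if `d(x,y) ≥ ε`, compare a continuum `K` through `x, y` with a continuum `E`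
through `x` containing two points `p, q` with `f p ≠ f q`: then
`d(f p, f q) ≤ diam f(E) ≤ η(diam X / ε) diam f(K)`, a uniform positive lower bound for `d_f(x,y)`.
-/

open Filter Topology

namespace IsQSControl

variable {η : ℝ → ℝ}

theorem nonneg (hη : IsQSControl η) {t : ℝ} (ht : 0 ≤ t) : 0 ≤ η t :=
  hη.2.2.1 ht

theorem map_zero (hη : IsQSControl η) : η 0 = 0 := by
  obtain ⟨s, hs, hηs⟩ := hη.2.2.2 (self_mem_Ici : (0 : ℝ) ∈ Ici 0)
  rcases (mem_Ici.mp hs).eq_or_lt with rfl | hs_pos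
  · exact hηs
  · have := hη.2.1 self_mem_Ici hs hs_pos
    linarith [hη.nonneg le_rfl]

theorem pos (hη : IsQSControl η) {t : ℝ} (ht : 0 < t) : 0 < η t :=
  hη.map_zero ▸ hη.2.1 self_mem_Ici ht.le ht

theorem monotoneOn (hη : IsQSControl η) : MonotoneOn η (Ici 0) :=
  hη.2.1.monotoneOn

end IsQSControl

theorem BoundedTurningWith.pos {X : Type*} [MetricSpace X] {C : ℝ}
    (hbt : BoundedTurningWith X C) {x y : X} (hxy : x ≠ y) : 0 < C := by
  obtain ⟨K, hK, hx, hy, hdiam⟩ := hbt x y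
  have hdist := dist_pos.mpr hxy
  have := dist_le_diam_of_mem hK.1.isBounded hx hy
  nlinarith

theorem BranchedQS.diam_image_le {X Y : Type*} [PseudoMetricSpace X] [PseudoMetricSpace Y]
    {η : ℝ → ℝ} {f : X → Y} (hf : BranchedQS η f) {E E' : Set X} (hE : IsContinuum E)
    (hE' : IsContinuum E') (hEn : E.Nontrivial) (hEn' : E'.Nontrivial) (hEE' : (E ∩ E').Nonempty)
    {T : ℝ} (hT : diam E / diam E' ≤ T) :
    diam (f '' E) ≤ η T * diam (f '' E') := by
  have hratio : 0 ≤ diam E / diam E' := div_nonneg diam_nonneg diam_nonneg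
  calc diam (f '' E) ≤ η (diam E / diam E') * diam (f '' E') :=
        hf.2.2 E E' hE hE' hEn hEn' hEE'
    _ ≤ η T * diam (f '' E') := by
        gcongr
        exact hf.2.1.monotoneOn hratio (hratio.trans hT) hT

section pullbackDist

variable {X Y : Type*} [TopologicalSpace X] [PseudoMetricSpace Y] {f : X → Y} {x y : X}

theorem pullbackDist_nonneg : 0 ≤ pullbackDist f x y :=
  Real.sInf_nonneg <| by
    rintro t ⟨K, -, -, -, rfl⟩
    exact diam_nonneg

theorem pullbackDist_le_diam_image {K : Set X} (hK : IsContinuum K) (hx : x ∈ K) (hy : y ∈ K) :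
    pullbackDist f x y ≤ diam (f '' K) :=
  csInf_le ⟨0, by rintro t ⟨K, -, -, -, rfl⟩; exact diam_nonneg⟩ ⟨K, hK, hx, hy, rfl⟩

theorem le_mul_pullbackDist (hxy : ∃ K : Set X, IsContinuum K ∧ x ∈ K ∧ y ∈ K) {a c : ℝ}
    (hc : 0 ≤ c) (h : ∀ K : Set X, IsContinuum K → x ∈ K → y ∈ K → a ≤ c * diam (f '' K)) :
    a ≤ c * pullbackDist f x y := by
  obtain ⟨K₀, hK₀, hx₀, hy₀⟩ := hxy
  rcases hc.eq_or_lt with rfl | hc_pos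
  · simpa using h K₀ hK₀ hx₀ hy₀
  rw [← div_le_iff₀' hc_pos]
  refine le_csInf ⟨_, K₀, hK₀, hx₀, hy₀, rfl⟩ ?_
  rintro t ⟨K, hK, hx, hy, rfl⟩
  exact (div_le_iff₀' hc_pos).mpr (h K hK hx hy)

end pullbackDist

section BoundedTurning

variable {X Y : Type*} [MetricSpace X] [PseudoMetricSpace Y] {C : ℝ} {η : ℝ → ℝ} {f : X → Y}

theorem BranchedQS.pullbackDist_le_mul_pullbackDist (hf : BranchedQS η f)
    (hbt : BoundedTurningWith X C) {x a b : X} (hxa : x ≠ a) (hxb : x ≠ b) :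
    pullbackDist f x a ≤ η (C * (dist x a / dist x b)) * pullbackDist f x b := by
  obtain ⟨K, hK, hxK, haK, hKdiam⟩ := hbt x a
  obtain ⟨K₀, hK₀, hxK₀, hbK₀, -⟩ := hbt x b
  have hdist_xb : 0 < dist x b := dist_pos.mpr hxb
  have hC : 0 < C := hbt.pos hxa
  have hT : 0 ≤ C * (dist x a / dist x b) := by positivity
  refine le_mul_pullbackDist ⟨K₀, hK₀, hxK₀, hbK₀⟩ (hf.2.1.nonneg hT) fun K' hK' hxK' hbK' => ?_
  have hK'diam : dist x b ≤ diam K' := dist_le_diam_of_mem hK'.1.isBounded hxK' hbK'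
  have hratio : diam K / diam K' ≤ C * (dist x a / dist x b) := by
    rw [← mul_div_assoc]
    exact div_le_div₀ (by positivity) hKdiam hdist_xb hK'diam
  calc pullbackDist f x a ≤ diam (f '' K) := pullbackDist_le_diam_image hK hxK haK
    _ ≤ _ := hf.diam_image_le hK hK' ⟨x, hxK, a, haK, hxa⟩ ⟨x, hxK', b, hbK', hxb⟩
        ⟨x, hxK, hxK'⟩ hratio

theorem tendsto_pullbackDist_zero [CompactSpace X] (hf : Continuous f)
    (hbt : BoundedTurningWith X C) {ι : Type*} {l : Filter ι} {u v : ι → X}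
    (huv : Tendsto (fun i => dist (u i) (v i)) l (𝓝 0)) :
    Tendsto (fun i => pullbackDist f (u i) (v i)) l (𝓝 0) := by
  rw [Metric.tendsto_nhds]
  intro ε hε
  obtain ⟨δ, hδ, hfδ⟩ :=
    Metric.uniformContinuous_iff.mp (CompactSpace.uniformContinuous_of_continuous hf) (ε / 2)
      (half_pos hε)
  have hCuv : Tendsto (fun i => C * dist (u i) (v i)) l (𝓝 0) := by
    simpa using huv.const_mul C
  filter_upwards [hCuv.eventually (gt_mem_nhds hδ)] with i hi
  obtain ⟨K, hK, huK, hvK, hKdiam⟩ := hbt (u i) (v i)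
  have hfK : diam (f '' K) ≤ ε / 2 := by
    refine diam_le_of_forall_dist_le (half_pos hε).le ?_
    rintro _ ⟨a, haK, rfl⟩ _ ⟨b, hbK, rfl⟩
    exact (hfδ ((dist_le_diam_of_mem hK.1.isBounded haK hbK).trans_lt
      (hKdiam.trans_lt hi))).le
  rw [Real.dist_0_eq_abs, abs_of_nonneg pullbackDist_nonneg]
  linarith [pullbackDist_le_diam_image (f := f) hK huK hvK]

theorem BranchedQS.dist_le_mul_pullbackDist [BoundedSpace X] (hf : BranchedQS η f)
    (hbt : BoundedTurningWith X C) (p q : X) {ε : ℝ} (hε : 0 < ε) {x y : X}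
    (hxy : ε ≤ dist x y) :
    dist (f p) (f q) ≤ η (diam (univ : Set X) / ε) * pullbackDist f x y := by
  by_cases hpq : p = q
  · rw [hpq, dist_self]
    exact mul_nonneg (hf.2.1.nonneg (div_nonneg diam_nonneg hε.le)) pullbackDist_nonneg
  obtain ⟨E, hE, hpE, hqE, -⟩ := hbt p q
  obtain ⟨L, hL, hxL, hpL, -⟩ := hbt x p
  obtain ⟨K₀, hK₀, hxK₀, hyK₀, -⟩ := hbt x y
  have hEL : IsContinuum (E ∪ L) := ⟨hE.1.union hL.1, IsConnected.union ⟨p, hpE, hpL⟩ hE.2 hL.2⟩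
  have hX : Bornology.IsBounded (univ : Set X) := Bornology.isBounded_univ.mpr ‹_›
  have hxy_ne : x ≠ y := by
    rintro rfl
    simp only [dist_self] at hxy
    linarith
  refine le_mul_pullbackDist ⟨K₀, hK₀, hxK₀, hyK₀⟩ (hf.2.1.nonneg (div_nonneg diam_nonneg hε.le))
    fun K hK hxK hyK => ?_
  have hKdiam : ε ≤ diam K := hxy.trans (dist_le_diam_of_mem hK.1.isBounded hxK hyK)
  have hratio : diam (E ∪ L) / diam K ≤ diam (univ : Set X) / ε :=
    div_le_div₀ diam_nonneg (diam_mono (subset_univ _) hX) hε hKdiam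
  calc dist (f p) (f q) ≤ diam (f '' (E ∪ L)) :=
        dist_le_diam_of_mem (hEL.1.image hf.1).isBounded (mem_image_of_mem f (Or.inl hpE))
          (mem_image_of_mem f (Or.inl hqE))
    _ ≤ _ := hf.diam_image_le hEL hK ⟨p, Or.inl hpE, q, Or.inl hqE, hpq⟩
        ⟨x, hxK, y, hyK, hxy_ne⟩ ⟨x, Or.inr hxL, hxK⟩ hratio

theorem BranchedQS.tendsto_dist_zero [BoundedSpace X] (hf : BranchedQS η f)
    (hbt : BoundedTurningWith X C) {p q : X} (hpq : 0 < dist (f p) (f q)) {ι : Type*} {l : Filter ι}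
    {u v : ι → X} (huv : Tendsto (fun i => pullbackDist f (u i) (v i)) l (𝓝 0)) :
    Tendsto (fun i => dist (u i) (v i)) l (𝓝 0) := by
  rw [Metric.tendsto_nhds]
  intro ε hε
  have hX : 0 < diam (univ : Set X) :=
    (dist_pos.mpr fun h => by simp [h] at hpq).trans_le
      (dist_le_diam_of_mem (Bornology.isBounded_univ.mpr ‹_›) (mem_univ p) (mem_univ q))
  have hη : 0 < η (diam (univ : Set X) / ε) := hf.2.1.pos (div_pos hX hε)
  have hc : 0 < dist (f p) (f q) / η (diam (univ : Set X) / ε) := div_pos hpq hη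
  filter_upwards [huv.eventually (gt_mem_nhds hc)] with i hi
  rw [Real.dist_0_eq_abs, abs_of_nonneg dist_nonneg]
  by_contra! hεi
  have := hf.dist_le_mul_pullbackDist hbt p q hε hεi
  rw [lt_div_iff₀' hη] at hi
  linarith

end BoundedTurning

theorem pullbackDist_id_quasisymmetric_general {X Y : Type*} [MetricSpace X] [CompactSpace X]
    [MetricSpace Y] (C : ℝ) (hbt : BoundedTurningWith X C)
    (η : ℝ → ℝ) (f : X → Y) (hf : BranchedQS η f) (hnc : ∃ p q : X, f p ≠ f q) :
    (∀ x a b₁ : X, x ≠ a → x ≠ b₁ → a ≠ b₁ →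
        pullbackDist f x a ≤ η (C * (dist x a / dist x b₁)) * pullbackDist f x b₁) ∧
      ∀ (u : ℕ → X) (p : X),
        Filter.Tendsto u Filter.atTop (nhds p) ↔
          Filter.Tendsto (fun m => pullbackDist f (u m) p) Filter.atTop (nhds 0) := by
  obtain ⟨p₀, q₀, hpq⟩ := hnc
  refine ⟨fun x a b hxa hxb _ => hf.pullbackDist_le_mul_pullbackDist hbt hxa hxb, fun u p => ?_⟩
  rw [tendsto_iff_dist_tendsto_zero]
  exact ⟨tendsto_pullbackDist_zero hf.1 hbt, hf.tendsto_dist_zero hbt (dist_pos.mpr hpq)⟩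

/-- For a non-constant branched quasisymmetry `f` with control `η` on a compact
`C`-bounded turning space, the identity map from `(X, d)` to `(X, d_f)` is an
`η̃`-quasisymmetric homeomorphism, where `η̃(t) = η(C t)`. -/
theorem pullbackDist_id_quasisymmetric {X Y : Type*} [MetricSpace X] [CompactSpace X]
    [MetricSpace Y] (C : ℝ) (hC : 1 ≤ C) (hbt : BoundedTurningWith X C)
    (η : ℝ → ℝ) (f : X → Y) (hf : BranchedQS η f) (hnc : ∃ p q : X, f p ≠ f q) :
    (∀ x a b₁ : X, x ≠ a → x ≠ b₁ → a ≠ b₁ →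
        pullbackDist f x a ≤ η (C * (dist x a / dist x b₁)) * pullbackDist f x b₁) ∧
      ∀ (u : ℕ → X) (p : X),
        Filter.Tendsto u Filter.atTop (nhds p) ↔
          Filter.Tendsto (fun m => pullbackDist f (u m) p) Filter.atTop (nhds 0) :=
  pullbackDist_id_quasisymmetric_general C hbt η f hf hnc
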